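/- Let n ≥ 2 and ℓ ≥ 1 be fixed integers, and let 𝓕 be the set of ALL degree-n fields. If there exist a real α ≥ 1, an unbounded increasing sequence of exponents k_j → ∞, and constants c_j > 0 such that for all real X ≥ 1 one has ∑_{K ∈ 𝓕(X)} |Cl_K[ℓ]|^{k_j} ≤ c_j · |𝓕(X)|^α for every j, then for every ε > 0 there exists c_ε > 0 such that every degree-n field K satisfies |Cl_K[ℓ]| ≤ c_ε · D_K^ε. -/

import Mathlib

open NumberField Filter

-- The absolute value of the discriminant of an intermediate field `K` of `ℚ̄/ℚ`
-- (junk value `0` in the irrelevant case that `K/ℚ` is infinite-dimensional).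
open scoped Classical in
noncomputable def absDisc (K : IntermediateField ℚ (AlgebraicClosure ℚ)) : ℕ :=
  if h : FiniteDimensional ℚ K then
    letI : NumberField K := { to_charZero := inferInstance, to_finiteDimensional := h }
    (NumberField.discr K).natAbs
  else 0

/-- The cardinality `|Cl_K[m]|` of the `m`-torsion subgroup of the class group of `K`. -/
noncomputable def clTors (K : IntermediateField ℚ (AlgebraicClosure ℚ)) (m : ℕ) : ℕ :=
  Nat.card {x : ClassGroup (𝓞 K) // x ^ m = 1}

/-!
If `N(X)` fields of degree `n` have `D_K ≤ X`, then keeping the single term `K` in the `k`-th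
moment at `X = D_K` gives `|Cl_K[ℓ]| ≤ (c_k N(D_K)^α)^(1/k)`. So everything follows once
`N(X) ≪ X^β` for some fixed `β`: taking `k ≥ αβ/ε` then gives the exponent `ε`. The polynomial
bound on `N(X)` is a quantitative Hermite theorem: by Minkowski, `K` has a primitive algebraic
integer all of whose conjugates are `≪ √D_K`, so `K = ℚ(x)` for a root `x` of an integer
polynomial of degree `n` with coefficients `≪ D_K^(n/2)`, and there are polynomially many of
those.
-/

open Polynomial Module NumberField.InfinitePlace NumberField.mixedEmbedding
open scoped NNReal ENNReal IntermediateField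

theorem le_finsum_mem_of_mem {ι : Type*} {s : Set ι} {f : ι → ℝ} (hs : s.Finite)
    (hf : ∀ i ∈ s, 0 ≤ f i) {i : ι} (hi : i ∈ s) : f i ≤ ∑ᶠ j ∈ s, f j := by
  rw [finsum_mem_eq_finite_toFinset_sum f hs]
  exact Finset.single_le_sum (fun j hj => hf j (hs.mem_toFinset.1 hj)) (hs.mem_toFinset.2 hi)

theorem le_mul_rpow_of_rpow_le_mul_rpow {a c C D α β k : ℝ} (ha : 0 ≤ a) (hc : 0 ≤ c)
    (hC : 0 ≤ C) (hD : 0 ≤ D) (hk : 0 < k) (h : a ^ k ≤ c * (C * D ^ β) ^ α) :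
    a ≤ (c * C ^ α) ^ k⁻¹ * D ^ (β * α / k) := by
  have hM : 0 ≤ c * (C * D ^ β) ^ α := by positivity
  calc a ≤ (c * (C * D ^ β) ^ α) ^ k⁻¹ := (Real.le_rpow_inv_iff_of_pos ha hM hk).2 h
    _ = (c * C ^ α) ^ k⁻¹ * D ^ (β * α / k) := by
      rw [Real.mul_rpow hC (by positivity), ← Real.rpow_mul hD, ← mul_assoc,
        Real.mul_rpow (by positivity) (by positivity), ← Real.rpow_mul hD, div_eq_mul_inv]

theorem exists_le_mul_rpow_of_moment_bound {ι : Type*} {P : ι → Prop} {f d : ι → ℝ}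
    (hf : ∀ i, 0 ≤ f i) (hd : ∀ i, P i → 1 ≤ d i) (hfin : ∀ X, {i | P i ∧ d i ≤ X}.Finite)
    {C β : ℝ} (hC : 0 < C)
    (hcount : ∀ X, 1 ≤ X → ({i | P i ∧ d i ≤ X}.ncard : ℝ) ≤ C * X ^ β)
    {α : ℝ} (hα : 0 ≤ α) {k c : ℕ → ℝ} (hk : Tendsto k atTop atTop) (hc : ∀ j, 0 < c j)
    (hmom : ∀ j X, 1 ≤ X →
      ∑ᶠ i ∈ {i | P i ∧ d i ≤ X}, f i ^ k j ≤ c j * ({i | P i ∧ d i ≤ X}.ncard : ℝ) ^ α)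
    (ε : ℝ) (hε : 0 < ε) : ∃ cε, 0 < cε ∧ ∀ i, P i → f i ≤ cε * d i ^ ε := by
  obtain ⟨j, hj⟩ := (hk.eventually_ge_atTop (max 1 (β * α / ε))).exists
  have hkj : 0 < k j := one_pos.trans_le ((le_max_left _ _).trans hj)
  have hexp : β * α / k j ≤ ε := by
    rw [div_le_iff₀ hkj, mul_comm ε]
    exact (div_le_iff₀ hε).1 ((le_max_right _ _).trans hj)
  refine ⟨(c j * C ^ α) ^ (k j)⁻¹, by have := hc j; positivity, fun i hi => ?_⟩
  have hdi := hd i hi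
  have hmoment : f i ^ k j ≤ c j * (C * d i ^ β) ^ α :=
    calc f i ^ k j ≤ ∑ᶠ i' ∈ {i' | P i' ∧ d i' ≤ d i}, f i' ^ k j :=
          le_finsum_mem_of_mem (hfin _) (fun i' _ => Real.rpow_nonneg (hf i') _) ⟨hi, le_rfl⟩
      _ ≤ c j * ({i' | P i' ∧ d i' ≤ d i}.ncard : ℝ) ^ α := hmom j _ hdi
      _ ≤ c j * (C * d i ^ β) ^ α := by have := (hc j).le; gcongr; exact hcount _ hdi
  calc f i ≤ (c j * C ^ α) ^ (k j)⁻¹ * d i ^ (β * α / k j) :=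
        le_mul_rpow_of_rpow_le_mul_rpow (hf i) (hc j).le hC.le (by linarith) hkj hmoment
    _ ≤ (c j * C ^ α) ^ (k j)⁻¹ * d i ^ ε := by have := hc j; gcongr

open Classical in
noncomputable def intPolysBounded (d : ℕ) (r : ℝ) : Finset ℤ[X] :=
  (Fintype.piFinset fun _ : Fin (d + 1) => Finset.Icc (-⌊r⌋) ⌊r⌋).image
    fun v => ∑ i : Fin (d + 1), monomial (i : ℕ) (v i)

theorem mem_intPolysBounded {d : ℕ} {r : ℝ} {f : ℤ[X]} (hf : f.natDegree ≤ d)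
    (hr : ∀ i, |(f.coeff i : ℝ)| ≤ r) : f ∈ intPolysBounded d r := by
  refine Finset.mem_image.2 ⟨fun i => f.coeff i, Fintype.mem_piFinset.2 fun i => ?_, ?_⟩
  · have := abs_le.1 (hr i)
    rw [Finset.mem_Icc, neg_le, Int.le_floor, Int.le_floor]
    push_cast
    constructor <;> linarith
  · rw [Fin.sum_univ_eq_sum_range (fun i => monomial i (f.coeff i)), ← as_sum_range' f]
    omega

theorem natDegree_le_of_mem_intPolysBounded {d : ℕ} {r : ℝ} {f : ℤ[X]}
    (hf : f ∈ intPolysBounded d r) : f.natDegree ≤ d := by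
  obtain ⟨v, -, rfl⟩ := Finset.mem_image.1 hf
  exact natDegree_sum_le_of_forall_le _ _ fun i _ => (natDegree_monomial_le _).trans i.is_le

theorem card_intPolysBounded_le (d : ℕ) {r : ℝ} (hr : 0 ≤ r) :
    ((intPolysBounded d r).card : ℝ) ≤ (2 * r + 1) ^ (d + 1) := by
  have hcard : ((Finset.Icc (-⌊r⌋) ⌊r⌋).card : ℝ) ≤ 2 * r + 1 := by
    rw [Int.card_Icc]
    have h0 : 0 ≤ ⌊r⌋ := Int.floor_nonneg.2 hr
    have : (((⌊r⌋ + 1 - -⌊r⌋).toNat : ℤ) : ℝ) = 2 * ⌊r⌋ + 1 := by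
      rw [Int.toNat_of_nonneg (by omega)]; push_cast; ring
    rw [← Int.cast_natCast, this]
    linarith [Int.floor_le r]
  calc ((intPolysBounded d r).card : ℝ)
      ≤ (Fintype.piFinset fun _ : Fin (d + 1) => Finset.Icc (-⌊r⌋) ⌊r⌋).card :=
        mod_cast Finset.card_image_le
    _ ≤ (2 * r + 1) ^ (d + 1) := by
        rw [Fintype.card_piFinset, Finset.prod_const, Finset.card_univ, Fintype.card_fin]
        push_cast
        gcongr

open Classical in
noncomputable def intPolyRoots (A : Type*) [Field A] (d : ℕ) (r : ℝ) : Finset A :=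
  (intPolysBounded d r).biUnion fun f => (f.aroots A).toFinset

theorem card_intPolyRoots_le (A : Type*) [Field A] (d : ℕ) {r : ℝ} (hr : 0 ≤ r) :
    ((intPolyRoots A d r).card : ℝ) ≤ d * (2 * r + 1) ^ (d + 1) := by
  classical
  have : (intPolyRoots A d r).card ≤ (intPolysBounded d r).card * d := by
    refine Finset.card_biUnion_le.trans (Finset.sum_le_card_nsmul _ _ _ fun f hf => ?_)
    exact (Multiset.toFinset_card_le _).trans <| (card_roots' _).trans <|
      natDegree_map_le.trans (natDegree_le_of_mem_intPolysBounded hf)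
  calc ((intPolyRoots A d r).card : ℝ) ≤ (intPolysBounded d r).card * d := mod_cast this
    _ ≤ d * (2 * r + 1) ^ (d + 1) := by
      rw [mul_comm]; gcongr; exact card_intPolysBounded_le d hr

theorem minkowskiBound_one_le (K : Type*) [Field K] [NumberField K] :
    minkowskiBound K ↑1 ≤ 2 ^ finrank ℚ K * NNReal.sqrt ‖discr K‖₊ := by
  rw [minkowskiBound, volume_fundamentalDomain_fractionalIdealLatticeBasis, Units.val_one,
    FractionalIdeal.absNorm_one, Rat.cast_one, ENNReal.ofReal_one, one_mul,
    mixedEmbedding.finrank, volume_fundamentalDomain_latticeBasis, mul_comm]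
  gcongr
  calc (2 : ℝ≥0∞)⁻¹ ^ nrComplexPlaces K * _ ≤ 1 * _ := by
        gcongr; exact pow_le_one₀ (by positivity) (by simp)
    _ = _ := one_mul _

theorem exists_primitive_element_le (K : Type*) [Field K] [NumberField K] :
    ∃ a : 𝓞 K, ℚ⟮(a : K)⟯ = ⊤ ∧
      ∀ w : InfinitePlace K, w a ≤ 2 ^ finrank ℚ K * √|(discr K : ℝ)| + 2 := by
  set B : ℝ≥0 := 2 ^ finrank ℚ K * NNReal.sqrt ‖discr K‖₊ + 1
  have hB : (B : ℝ) + 1 = 2 ^ finrank ℚ K * √|(discr K : ℝ)| + 2 := by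
    simp [B, Real.coe_sqrt, Int.norm_eq_abs]; ring
  have hmink : minkowskiBound K ↑1 < B := by
    refine (minkowskiBound_one_le K).trans_lt ?_
    calc _ < (2 : ℝ≥0∞) ^ finrank ℚ K * NNReal.sqrt ‖discr K‖₊ + 1 :=
          ENNReal.lt_add_right (by finiteness) one_ne_zero
      _ = B := by simp [B]
  obtain ⟨w₀⟩ := (inferInstance : Nonempty (InfinitePlace K))
  by_cases hw₀ : IsReal w₀
  · obtain ⟨a, ha, hlt⟩ := exists_primitive_element_lt_of_isReal K hw₀ <|
      hmink.trans_le <| ENNReal.coe_le_coe.2 <|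
        le_mul_of_one_le_left B.2 (one_le_convexBodyLTFactor K)
    refine ⟨a, ha, fun w => (hlt w).le.trans ?_⟩
    rw [← hB, NNReal.coe_max, NNReal.coe_one]
    exact max_le (by linarith) (by linarith [B.2])
  · obtain ⟨a, ha, hlt⟩ := exists_primitive_element_lt_of_isComplex K
      (not_isReal_iff_isComplex.1 hw₀) <|
      hmink.trans_le <| ENNReal.coe_le_coe.2 <|
        le_mul_of_one_le_left B.2 (one_le_convexBodyLT'Factor K)
    refine ⟨a, ha, fun w => (hlt w).le.trans ?_⟩
    rw [← hB, Real.sqrt_le_iff]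
    constructor <;> nlinarith [B.2]

/-- Minkowski gives a primitive integer with conjugates `≤ 2ⁿ√D + 2`; the coefficients of its
minimal polynomial are then bounded by this. -/
noncomputable def coeffBound (n : ℕ) (D : ℝ) : ℝ :=
  (2 ^ n * √D + 2) ^ n * n.choose (n / 2)

theorem coeffBound_nonneg (n : ℕ) (D : ℝ) : 0 ≤ coeffBound n D := by
  unfold coeffBound; positivity

theorem abs_coeff_minpoly_le {K : Type*} [Field K] [NumberField K] {a : 𝓞 K} {B : ℝ}
    (hB : 1 ≤ B) (ha : ∀ w : InfinitePlace K, w a ≤ B) (i : ℕ) :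
    |((minpoly ℤ (a : K)).coeff i : ℝ)| ≤
      B ^ finrank ℚ K * (finrank ℚ K).choose (finrank ℚ K / 2) := by
  have h := Embeddings.coeff_bdd_of_norm_le ((le_iff_le (a : K) _).1 ha) i
  rwa [max_eq_left hB, minpoly.isIntegrallyClosed_eq_field_fractions' ℚ a.isIntegral_coe,
    coeff_map, eq_intCast, Int.norm_cast_rat, Int.norm_eq_abs] at h

theorem exists_mem_intPolyRoots_eq_adjoin {A : Type*} [Field A] [CharZero A]
    (K : IntermediateField ℚ A) [NumberField K] {D : ℝ} (hD : |(discr K : ℝ)| ≤ D) :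
    ∃ x ∈ intPolyRoots A (finrank ℚ K) (coeffBound (finrank ℚ K) D), K = ℚ⟮x⟯ := by
  classical
  obtain ⟨a, ha, hle⟩ := exists_primitive_element_le K
  have hint := a.isIntegral_coe
  have hdeg : (minpoly ℤ (a : K)).natDegree = finrank ℚ K := by
    rwa [Field.primitive_element_iff_minpoly_natDegree_eq,
      minpoly.isIntegrallyClosed_eq_field_fractions' ℚ hint,
      (minpoly.monic hint).natDegree_map] at ha
  have hB : (1 : ℝ) ≤ 2 ^ finrank ℚ K * √|(discr K : ℝ)| + 2 := by
    have : (0 : ℝ) ≤ 2 ^ finrank ℚ K * √|(discr K : ℝ)| := by positivity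
    linarith
  have hcoeff (i : ℕ) : |((minpoly ℤ (a : K)).coeff i : ℝ)| ≤ coeffBound (finrank ℚ K) D :=
    (abs_coeff_minpoly_le hB hle i).trans (by unfold coeffBound; gcongr)
  refine ⟨algebraMap K A a, Finset.mem_biUnion.2 ⟨minpoly ℤ (a : K),
    mem_intPolysBounded hdeg.le hcoeff, ?_⟩, ?_⟩
  · rw [Multiset.mem_toFinset, mem_aroots]
    exact ⟨minpoly.ne_zero hint, by rw [aeval_algebraMap_apply, minpoly.aeval, map_zero]⟩
  · convert (congrArg IntermediateField.lift ha).symm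
    · exact (IntermediateField.lift_top (K := K)).symm
    · exact (IntermediateField.lift_adjoin_simple _ _ _).symm

theorem absDisc_eq_abs_discr (K : IntermediateField ℚ (AlgebraicClosure ℚ)) [NumberField K] :
    (absDisc K : ℝ) = |(discr K : ℝ)| := by
  rw [absDisc, dif_pos (inferInstance : FiniteDimensional ℚ K), Nat.cast_natAbs, Int.cast_abs]

theorem one_le_absDisc (K : IntermediateField ℚ (AlgebraicClosure ℚ)) [NumberField K] :
    1 ≤ (absDisc K : ℝ) := by
  rw [absDisc_eq_abs_discr]
  exact_mod_cast Int.one_le_abs (discr_ne_zero K)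

theorem numberField_of_finrank_pos {A : Type*} [Field A] [CharZero A] {K : IntermediateField ℚ A}
    (h : 0 < finrank ℚ K) : NumberField K :=
  @NumberField.mk _ _ inferInstance (FiniteDimensional.of_finrank_pos h)

theorem setOf_finrank_absDisc_le_subset {n : ℕ} (hn : 0 < n) (X : ℝ) :
    {K : IntermediateField ℚ (AlgebraicClosure ℚ) | finrank ℚ K = n ∧ (absDisc K : ℝ) ≤ X} ⊆
      (fun x => ℚ⟮x⟯) '' intPolyRoots (AlgebraicClosure ℚ) n (coeffBound n X) := by
  rintro K ⟨rfl, hX⟩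
  have := numberField_of_finrank_pos hn
  obtain ⟨x, hx, hK⟩ := exists_mem_intPolyRoots_eq_adjoin K (absDisc_eq_abs_discr K ▸ hX)
  exact ⟨x, hx, hK.symm⟩

theorem two_mul_coeffBound_add_one_le {n : ℕ} (hn : 0 < n) {X : ℝ} (hX : 1 ≤ X) :
    2 * coeffBound n X + 1 ≤
      (2 ^ (n * (n + 1) + 1) * n.choose (n / 2) + 1) * X ^ n := by
  have hsqrt : √X ≤ X := (Real.sqrt_le_left (by linarith)).2 (by nlinarith)
  have htwo : (2 : ℝ) ≤ 2 ^ n * X := by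
    calc (2 : ℝ) = 2 ^ 1 * 1 := by norm_num
      _ ≤ 2 ^ n * X := by gcongr; exacts [one_le_two, hn]
  have hbase : 2 ^ n * √X + 2 ≤ 2 ^ (n + 1) * X := by
    rw [pow_succ]; nlinarith [pow_pos (two_pos (α := ℝ)) n]
  have hXn : 1 ≤ X ^ n := one_le_pow₀ hX
  unfold coeffBound
  calc 2 * ((2 ^ n * √X + 2) ^ n * n.choose (n / 2)) + 1
      ≤ 2 * ((2 ^ (n + 1) * X) ^ n * n.choose (n / 2)) + X ^ n := by gcongr
    _ = (2 ^ (n * (n + 1) + 1) * n.choose (n / 2) + 1) * X ^ n := by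
      rw [mul_pow, ← pow_mul, pow_succ]; ring

theorem finite_setOf_finrank_absDisc_le {n : ℕ} (hn : 0 < n) (X : ℝ) :
    {K : IntermediateField ℚ (AlgebraicClosure ℚ) |
      finrank ℚ K = n ∧ (absDisc K : ℝ) ≤ X}.Finite :=
  ((intPolyRoots _ _ _).finite_toSet.image _).subset (setOf_finrank_absDisc_le_subset hn X)

theorem ncard_setOf_finrank_absDisc_le {n : ℕ} (hn : 0 < n) {X : ℝ} (hX : 1 ≤ X) :
    ({K : IntermediateField ℚ (AlgebraicClosure ℚ) |
      finrank ℚ K = n ∧ (absDisc K : ℝ) ≤ X}.ncard : ℝ) ≤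
      n * (2 ^ (n * (n + 1) + 1) * n.choose (n / 2) + 1) ^ (n + 1) *
        X ^ ((n * (n + 1) : ℕ) : ℝ) := by
  calc ({K : IntermediateField ℚ (AlgebraicClosure ℚ) |
        finrank ℚ K = n ∧ (absDisc K : ℝ) ≤ X}.ncard : ℝ)
      ≤ (intPolyRoots (AlgebraicClosure ℚ) n (coeffBound n X)).card := by
        rw [← Set.ncard_coe_finset]
        exact_mod_cast (Set.ncard_le_ncard (setOf_finrank_absDisc_le_subset hn X)
          ((Finset.finite_toSet _).image _)).trans (Set.ncard_image_le (Finset.finite_toSet _))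
    _ ≤ n * (2 * coeffBound n X + 1) ^ (n + 1) :=
        card_intPolyRoots_le _ _ (coeffBound_nonneg n X)
    _ ≤ n * ((2 ^ (n * (n + 1) + 1) * n.choose (n / 2) + 1) * X ^ n) ^ (n + 1) := by
        have := coeffBound_nonneg n X
        gcongr
        exact two_mul_coeffBound_add_one_le hn hX
    _ = _ := by rw [Real.rpow_natCast, mul_pow, ← pow_mul, mul_assoc, mul_comm n (n + 1)]

theorem moments_imply_ell_torsion_conjecture_general
    (n ℓ : ℕ) (hn : 2 ≤ n)
    (α : ℝ) (hα : 1 ≤ α)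
    (k : ℕ → ℝ)
    (hktop : Tendsto k atTop atTop)
    (c : ℕ → ℝ) (hc : ∀ j, 0 < c j)
    (hmom : ∀ j : ℕ, ∀ X : ℝ, 1 ≤ X →
      ∑ᶠ K ∈ {K : IntermediateField ℚ (AlgebraicClosure ℚ) |
          Module.finrank ℚ K = n ∧ (absDisc K : ℝ) ≤ X}, (clTors K ℓ : ℝ) ^ (k j)
        ≤ c j * (({K : IntermediateField ℚ (AlgebraicClosure ℚ) |
          Module.finrank ℚ K = n ∧ (absDisc K : ℝ) ≤ X}).ncard : ℝ) ^ α) :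
    ∀ ε : ℝ, 0 < ε → ∃ cε : ℝ, 0 < cε ∧
      ∀ K : IntermediateField ℚ (AlgebraicClosure ℚ), Module.finrank ℚ K = n →
        (clTors K ℓ : ℝ) ≤ cε * (absDisc K : ℝ) ^ ε := by
  have hn₀ : 0 < n := by omega
  exact exists_le_mul_rpow_of_moment_bound (fun K => Nat.cast_nonneg (clTors K ℓ))
    (fun K hK => have := numberField_of_finrank_pos (hK ▸ hn₀); one_le_absDisc K)
    (finite_setOf_finrank_absDisc_le hn₀) (by positivity)
    (fun X hX => ncard_setOf_finrank_absDisc_le hn₀ hX) (by linarith) hktop hc hmom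

/-- Statement 0 for the family of ALL degree-`n` fields: uniform control of
arbitrarily high moments of `|Cl_K[ℓ]|` implies the `ℓ`-torsion conjecture in degree `n`. -/
theorem moments_imply_ell_torsion_conjecture
    (n ℓ : ℕ) (hn : 2 ≤ n) (hℓ : 1 ≤ ℓ)
    (α : ℝ) (hα : 1 ≤ α)
    (k : ℕ → ℝ) (hkmono : Monotone k)
    (hktop : Tendsto k atTop atTop)
    (c : ℕ → ℝ) (hc : ∀ j, 0 < c j)
    (hmom : ∀ j : ℕ, ∀ X : ℝ, 1 ≤ X →
      ∑ᶠ K ∈ {K : IntermediateField ℚ (AlgebraicClosure ℚ) |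
          Module.finrank ℚ K = n ∧ (absDisc K : ℝ) ≤ X}, (clTors K ℓ : ℝ) ^ (k j)
        ≤ c j * (({K : IntermediateField ℚ (AlgebraicClosure ℚ) |
          Module.finrank ℚ K = n ∧ (absDisc K : ℝ) ≤ X}).ncard : ℝ) ^ α) :
    ∀ ε : ℝ, 0 < ε → ∃ cε : ℝ, 0 < cε ∧
      ∀ K : IntermediateField ℚ (AlgebraicClosure ℚ), Module.finrank ℚ K = n →
        (clTors K ℓ : ℝ) ≤ cε * (absDisc K : ℝ) ^ ε :=
  moments_imply_ell_torsion_conjecture_general n ℓ hn α hα k hktop c hc hmom
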